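/- arXiv:1111.2007 — 5 statements merged into one kernel-verified Lean document; each statement's English description precedes it below -/
import Mathlib

section
/- Let p(t) = at + b be an admissible Hilbert polynomial for subschemes of P^n, i.e., a > 0 and b ≥ −a(a−3)/2. Then the Gotzmann number of p(t) is r = a(a−1)/2 + b. -/
/-!
The summand `binomial(t + a_i - i, a_i)` has second difference `binomial(t + a_i - i, a_i - 2)`
in `t`, which is positive for `t ≥ r` as soon as `a_i ≥ 2`. A linear polynomial has vanishing
second difference, so all `a_i ≤ 1`, and since the `a_i` decrease they are `m` ones followed by
`r - m` zeros. That sum is `m t + r - m(m-1)/2`, which forces `m = a` and `r = a(a-1)/2 + b`;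
conversely the decomposition exists as soon as `m ≤ r`, and for `m = a` this is exactly the
admissibility bound on `b`.
-/

noncomputable section

/-- The "binomial coefficient" `binomial(x, k)` with integer top argument, as a rational:
`(x)(x-1)⋯(x-k+1)/k!`. -/
def intBinom (x : ℤ) (k : ℕ) : ℚ :=
  (∏ j ∈ Finset.range k, ((x : ℚ) - (j : ℚ))) / (Nat.factorial k : ℚ)

/-- `r` is the Gotzmann number of the numerical polynomial `p` if `p` admits the Gotzmann
binomial decomposition `p(t) = Σ_{i=1}^{r} binomial(t + a_i - i + 1, a_i)` with
`a_1 ≥ a_2 ≥ … ≥ a_r ≥ 0` (written below with `i` running over `Fin r`, i.e. `0`-indexed). -/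
def IsGotzmannNumber (p : ℤ → ℚ) (r : ℕ) : Prop :=
  ∃ a : Fin r → ℕ, Antitone a ∧
    ∀ t : ℤ, p t = ∑ i : Fin r, intBinom (t + (a i : ℤ) - (i : ℤ)) (a i)

theorem intBinom_eq_choose (x : ℤ) (k : ℕ) : intBinom x k = ((Ring.choose x k : ℤ) : ℚ) := by
  have h := Ring.descPochhammer_eq_factorial_smul_choose x k
  rw [← Polynomial.eval_eq_smeval, descPochhammer_eval_eq_prod_range, nsmul_eq_mul] at h
  rw [intBinom, div_eq_iff (by positivity), mul_comm]
  exact_mod_cast h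

theorem intBinom_zero_right (x : ℤ) : intBinom x 0 = 1 := by
  simp [intBinom]

theorem intBinom_one_right (x : ℤ) : intBinom x 1 = x := by
  simp [intBinom]

theorem intBinom_succ_succ (x : ℤ) (k : ℕ) :
    intBinom (x + 1) (k + 1) = intBinom x k + intBinom x (k + 1) := by
  simp only [intBinom_eq_choose, Ring.choose_succ_succ, Int.cast_add]

theorem intBinom_pos {x : ℤ} {k : ℕ} (h : (k : ℤ) ≤ x) : 0 < intBinom x k := by
  lift x to ℕ using (Int.natCast_nonneg k).trans h
  rw [intBinom_eq_choose, Ring.choose_natCast]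
  exact_mod_cast Nat.choose_pos (by omega)

theorem intBinom_second_diff (x : ℤ) (k : ℕ) :
    intBinom (x + 2) k - 2 * intBinom (x + 1) k + intBinom x k =
      if 2 ≤ k then intBinom x (k - 2) else 0 := by
  match k with
  | 0 => norm_num [intBinom_zero_right]
  | 1 => simp only [intBinom_one_right]; push_cast; ring
  | k + 2 =>
    rw [show x + 2 = x + 1 + 1 by ring, intBinom_succ_succ, intBinom_succ_succ,
      intBinom_succ_succ]
    simp only [le_add_iff_nonneg_left, zero_le, ↓reduceIte, add_tsub_cancel_right]
    ring

theorem le_one_of_second_diff_eq_zero {r : ℕ} {p : ℤ → ℚ} {a : Fin r → ℕ}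
    (hp : ∀ t, p t = ∑ i : Fin r, intBinom (t + a i - i) (a i)) {t : ℤ} (ht : (r : ℤ) ≤ t)
    (h : p (t + 2) - 2 * p (t + 1) + p t = 0) (i : Fin r) : a i ≤ 1 := by
  have hpos : ∀ j : Fin r, 2 ≤ a j → 0 < intBinom (t + a j - j) (a j - 2) := fun j hj =>
    intBinom_pos (by have := j.isLt; push_cast [Nat.cast_sub hj]; omega)
  have hsum : ∑ j, (if 2 ≤ a j then intBinom (t + a j - j) (a j - 2) else 0) =
      p (t + 2) - 2 * p (t + 1) + p t := by
    rw [hp, hp, hp, Finset.mul_sum, ← Finset.sum_sub_distrib, ← Finset.sum_add_distrib]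
    refine Finset.sum_congr rfl fun j _ => ?_
    rw [← intBinom_second_diff (t + a j - j)]
    ring_nf
  rw [h] at hsum
  have hnonneg : ∀ j ∈ Finset.univ,
      0 ≤ if 2 ≤ a j then intBinom (t + a j - j) (a j - 2) else 0 := fun j _ => by
    split_ifs with hj
    exacts [(hpos j hj).le, le_rfl]
  by_contra! hi
  have hzero := (Finset.sum_eq_zero_iff_of_nonneg hnonneg).1 hsum i (Finset.mem_univ i)
  rw [if_pos (show 2 ≤ a i from hi)] at hzero
  exact (hpos i hi).ne' hzero

def stepExponents (r m : ℕ) (i : Fin r) : ℕ :=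
  if (i : ℕ) < m then 1 else 0

theorem antitone_stepExponents (r m : ℕ) : Antitone (stepExponents r m) := by
  intro i j hij
  have : (i : ℕ) ≤ j := hij
  unfold stepExponents
  split_ifs <;> omega

theorem exists_eq_stepExponents {r : ℕ} {a : Fin r → ℕ} (ha : Antitone a)
    (h1 : ∀ i, a i ≤ 1) : ∃ m ≤ r, a = stepExponents r m := by
  set S := Finset.univ.filter fun j => a j = 1
  have lt_card_of_eq_one : ∀ i, a i = 1 → (i : ℕ) < S.card := fun i hi => by
    have hsub : Finset.Iic i ⊆ S := fun j hj => by
      have := ha (Finset.mem_Iic.1 hj)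
      have := h1 j
      simp only [S, Finset.mem_filter, Finset.mem_univ, true_and]
      omega
    simpa using Finset.card_le_card hsub
  have card_le_of_eq_zero : ∀ i, a i = 0 → S.card ≤ i := fun i hi => by
    have hsub : S ⊆ Finset.Iio i := fun j hj => by
      simp only [S, Finset.mem_filter, Finset.mem_univ, true_and] at hj
      rw [Finset.mem_Iio]
      by_contra! hij
      have := ha hij
      omega
    simpa using Finset.card_le_card hsub
  refine ⟨S.card, (Finset.card_le_univ S).trans (by simp), funext fun i => ?_⟩
  have := h1 i
  have := lt_card_of_eq_one i
  have := card_le_of_eq_zero i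
  unfold stepExponents
  split_ifs <;> omega

theorem sum_intBinom_stepExponents {r m : ℕ} (hm : m ≤ r) (t : ℤ) :
    ∑ i : Fin r, intBinom (t + stepExponents r m i - i) (stepExponents r m i) =
      m * t + r - m * (m - 1) / 2 := by
  have hgauss : ∑ i ∈ Finset.range m, (i : ℚ) = m * (m - 1) / 2 := by
    rw [← Nat.cast_sum, Finset.sum_range_id, ← Nat.choose_two_right, Nat.cast_choose_two]
  unfold stepExponents
  rw [Fin.sum_univ_eq_sum_range (fun i => intBinom (t + (if i < m then 1 else 0 : ℕ) - i)
      (if i < m then 1 else 0)), ← Finset.sum_range_add_sum_Ico _ hm]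
  rw [Finset.sum_congr rfl (g := fun i : ℕ => (t : ℚ) + 1 - i) fun i hi => by
      simp [Finset.mem_range.1 hi, intBinom_one_right],
    Finset.sum_congr (s₁ := Finset.Ico m r) rfl (g := fun _ => (1 : ℚ)) fun i hi => by
      simp [(Finset.mem_Ico.1 hi).1.not_gt, intBinom_zero_right]]
  simp only [Finset.sum_sub_distrib, Finset.sum_const, Finset.card_range, Nat.card_Ico,
    nsmul_eq_mul, hgauss, Nat.cast_sub hm]
  ring

theorem isGotzmannNumber_linear_iff {α β : ℚ} {r : ℕ} :
    IsGotzmannNumber (fun t => α * t + β) r ↔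
      ∃ m : ℕ, m ≤ r ∧ α = m ∧ β = r - m * (m - 1) / 2 := by
  constructor
  · rintro ⟨a, ha, hp⟩
    have h1 := le_one_of_second_diff_eq_zero hp (t := r) le_rfl (by push_cast; ring)
    obtain ⟨m, hm, rfl⟩ := exists_eq_stepExponents ha h1
    have hp' t := (hp t).trans (sum_intBinom_stepExponents hm t)
    have h0 := hp' 0
    have h1 := hp' 1
    push_cast at h0 h1
    exact ⟨m, hm, by linarith, by linarith⟩
  · rintro ⟨m, hm, rfl, rfl⟩
    refine ⟨stepExponents r m, antitone_stepExponents r m, fun t => ?_⟩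
    rw [sum_intBinom_stepExponents hm]
    ring

/-- Let `p(t) = at + b` be an admissible Hilbert polynomial for subschemes of projective
space, i.e. `a > 0` and `b ≥ -a(a-3)/2`. Then the Gotzmann number of `p(t)` is
`r = a(a-1)/2 + b`. -/
theorem gotzmannNumber_linear (a b : ℤ) (ha : 0 < a) (hb : 2 * b ≥ -(a * (a - 3))) :
    ∃ r : ℕ, 2 * (r : ℤ) = a * (a - 1) + 2 * b ∧
      IsGotzmannNumber (fun t => (a : ℚ) * (t : ℚ) + (b : ℚ)) r ∧
      ∀ r' : ℕ, IsGotzmannNumber (fun t => (a : ℚ) * (t : ℚ) + (b : ℚ)) r' → r' = r := by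
  lift a to ℕ using ha.le with m
  obtain ⟨c, hc⟩ := Int.even_mul_pred_self m
  have hcb : 0 ≤ c + b := by linarith
  lift c + b to ℕ using hcb with r hcr
  have hr : 2 * (r : ℤ) = m * (m - 1) + 2 * b := by linarith
  have hrQ : 2 * (r : ℚ) = m * (m - 1) + 2 * b := by exact_mod_cast hr
  have hmr : m ≤ r := by exact_mod_cast (show (m : ℤ) ≤ r by linarith)
  refine ⟨r, hr, isGotzmannNumber_linear_iff.2 ⟨m, hmr, Int.cast_natCast m, by linarith⟩,
    fun r' hr' => ?_⟩
  obtain ⟨m', -, hm', hb'⟩ := isGotzmannNumber_linear_iff.1 hr'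
  have : (m' : ℚ) = m := by exact_mod_cast hm'.symm
  rw [this] at hb'
  exact_mod_cast (by linarith : (r' : ℚ) = r)

end
end

section
/- Let A = K be a field, T = K[x_0,...,x_n], J a strongly stable monomial ideal generated in degree m, and F a J-marked set generating an ideal I ⊆ T. Then dim_K I_t ≥ dim_K J_t for every t ≥ m. -/
open MvPolynomial

noncomputable section

/-- The total degree of an exponent vector. -/
def degOf {N : ℕ} (α : Fin N →₀ ℕ) : ℕ := α.sum fun _ e => e

/-- The degree `t` homogeneous component of a homogeneous ideal, as a `K`-subspace. -/
def degPiece {K : Type*} [Field K] {N : ℕ} (I : Ideal (MvPolynomial (Fin N) K)) (t : ℕ) :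
    Submodule K (MvPolynomial (Fin N) K) :=
  (Submodule.restrictScalars K
      (I : Submodule (MvPolynomial (Fin N) K) (MvPolynomial (Fin N) K)))
    ⊓ homogeneousSubmodule (Fin N) K t

/-- The Hilbert function of the quotient by a homogeneous ideal:
`dim_K (P/I)_t = dim_K P_t - dim_K I_t`. -/
def hilbF {K : Type*} [Field K] {N : ℕ} (I : Ideal (MvPolynomial (Fin N) K)) (t : ℕ) : ℕ :=
  Module.finrank K (homogeneousSubmodule (Fin N) K t) - Module.finrank K (degPiece I t)

/-- The ideal generated by the monomials with exponents in `S`. -/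
def monIdeal (K : Type*) [Field K] {N : ℕ} (S : Set (Fin N →₀ ℕ)) :
    Ideal (MvPolynomial (Fin N) K) :=
  Ideal.span ((fun a => (monomial a (1 : K))) '' S)

/-- A monomial ideal `J` is strongly stable: it is generated by monomials and for every
term `x^α ∈ J`, every `x_i ∣ x^α` and every `j > i`, also `(x_j/x_i)·x^α ∈ J`. -/
def SStable {K : Type*} [Field K] {N : ℕ} (J : Ideal (MvPolynomial (Fin N) K)) : Prop :=
  (∃ S : Set (Fin N →₀ ℕ), J = monIdeal K S) ∧
  ∀ α : Fin N →₀ ℕ, (monomial α (1 : K)) ∈ J → ∀ i j : Fin N, i < j → α i ≠ 0 →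
    (monomial (α - Finsupp.single i 1 + Finsupp.single j 1) (1 : K)) ∈ J

/-- A `B`-marked set: for each exponent `α ∈ B` (the monomial basis of `J = (B)`), a
homogeneous polynomial `f α = x^α - Σ c_{αγ} x^γ` with head term `x^α` (coefficient `1`) and
all other terms `x^γ` monomials of the same degree not belonging to `J`. -/
def IsMarkedSet {K : Type*} [Field K] {N : ℕ} (B : Finset (Fin N →₀ ℕ))
    (f : (Fin N →₀ ℕ) → MvPolynomial (Fin N) K) : Prop :=
  ∀ α ∈ B, (f α).IsHomogeneous (degOf α) ∧ (f α).coeff α = 1 ∧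
    ∀ β, β ≠ α → (f α).coeff β ≠ 0 →
      (monomial β (1 : K)) ∉ monIdeal K (B : Set (Fin N →₀ ℕ))

/-- The `K`-span of the monomials lying outside the monomial ideal `J = (B)`. -/
def compSpan (K : Type*) [Field K] {N : ℕ} (B : Finset (Fin N →₀ ℕ)) :
    Submodule K (MvPolynomial (Fin N) K) :=
  Submodule.span K
    { p | ∃ β : Fin N →₀ ℕ, (monomial β (1 : K)) ∉ monIdeal K (B : Set (Fin N →₀ ℕ)) ∧
      p = monomial β (1 : K) }

/-- A marked set `f` is a `J`-marked basis if the monomials outside `J = (B)` freely generate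
the quotient `T/(F)`, i.e. `T` is the direct sum (as `K`-vector space) of the ideal generated
by the marked polynomials and the span of the monomials outside `J`. -/
def IsMarkedBasis {K : Type*} [Field K] {N : ℕ} (B : Finset (Fin N →₀ ℕ))
    (f : (Fin N →₀ ℕ) → MvPolynomial (Fin N) K) : Prop :=
  IsMarkedSet B f ∧
  (Submodule.restrictScalars K
      ((Ideal.span (f '' (B : Set (Fin N →₀ ℕ)))) :
        Submodule (MvPolynomial (Fin N) K) (MvPolynomial (Fin N) K)))
    ⊓ compSpan K B = ⊥ ∧
  (Submodule.restrictScalars K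
      ((Ideal.span (f '' (B : Set (Fin N →₀ ℕ)))) :
        Submodule (MvPolynomial (Fin N) K) (MvPolynomial (Fin N) K)))
    ⊔ compSpan K B = ⊤

section Aux

variable {K : Type*} [Field K] {N : ℕ}

lemma degOf_eq_degree (a : Fin N →₀ ℕ) : degOf a = Finsupp.degree a := rfl

lemma degOf_eq_sum (a : Fin N →₀ ℕ) : degOf a = ∑ i : Fin N, a i :=
  Finsupp.sum_fintype _ _ (fun _ => rfl)

lemma degOf_add (a b : Fin N →₀ ℕ) : degOf (a + b) = degOf a + degOf b := by
  simp [degOf_eq_sum, Finsupp.add_apply, Finset.sum_add_distrib]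

lemma degOf_single (i : Fin N) : degOf (Finsupp.single i 1) = 1 := by
  simp [degOf_eq_sum, Finsupp.single_apply]

lemma eq_of_le_of_degOf_eq {a b : Fin N →₀ ℕ} (h : a ≤ b) (hd : degOf a = degOf b) :
    a = b := by
  rw [degOf_eq_sum, degOf_eq_sum] at hd
  ext i
  exact (Finset.sum_eq_sum_iff_of_le (fun i _ => h i)).mp hd i (Finset.mem_univ i)

lemma exists_le_of_coeff_ne_zero {S : Set (Fin N →₀ ℕ)} {p : MvPolynomial (Fin N) K}
    (hp : p ∈ monIdeal K S) {β : Fin N →₀ ℕ} (hβ : coeff β p ≠ 0) :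
    ∃ a ∈ S, a ≤ β := by
  classical
  revert hβ
  refine Submodule.span_induction (p := fun q _ => ∀ β, coeff β q ≠ 0 → ∃ a ∈ S, a ≤ β)
    ?_ ?_ ?_ ?_ hp β
  · rintro x ⟨a, ha, rfl⟩ β hβ
    rw [coeff_monomial] at hβ
    split_ifs at hβ with h
    · exact ⟨a, ha, h ▸ le_rfl⟩
    · exact absurd rfl hβ
  · intro β hβ; simp at hβ
  · intro x y hx hy ihx ihy β hβ
    rw [coeff_add] at hβ
    rcases ne_or_eq (coeff β x) 0 with h | h
    · exact ihx β h
    · exact ihy β (by simpa [h] using hβ)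
  · intro q x hx ihx β hβ
    have hβ' : β ∈ (q * x).support := by rwa [MvPolynomial.mem_support_iff]
    have := MvPolynomial.support_mul q x hβ'
    rw [Finset.mem_add] at this
    obtain ⟨u, hu, v, hv, rfl⟩ := this
    obtain ⟨a, ha, hav⟩ := ihx v (MvPolynomial.mem_support_iff.mp hv)
    exact ⟨a, ha, hav.trans le_add_self⟩

lemma monomial_mem_monIdeal_iff {S : Set (Fin N →₀ ℕ)} {β : Fin N →₀ ℕ} :
    (monomial β (1 : K)) ∈ monIdeal K S ↔ ∃ a ∈ S, a ≤ β := by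
  constructor
  · intro h
    exact exists_le_of_coeff_ne_zero h (β := β) (by simp)
  · rintro ⟨a, ha, hle⟩
    have : (monomial β (1 : K)) = monomial (β - a) 1 * monomial a 1 := by
      rw [monomial_mul, one_mul, tsub_add_cancel_of_le hle]
    rw [this]
    exact Ideal.mul_mem_left _ _ (Ideal.subset_span ⟨a, ha, rfl⟩)

/-- The projection keeping only the monomials with exponents in `S`. -/
def projJ (S : Set ((Fin N →₀ ℕ))) : MvPolynomial (Fin N) K →ₗ[K] MvPolynomial (Fin N) K where
  toFun p := letI := Classical.decPred (· ∈ S);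
    AddMonoidAlgebra.ofCoeff (Finsupp.filter (· ∈ S) (AddMonoidAlgebra.coeff p))
  map_add' x y := by letI := Classical.decPred (· ∈ S); exact congrArg AddMonoidAlgebra.ofCoeff Finsupp.filter_add
  map_smul' c x := by letI := Classical.decPred (· ∈ S); exact congrArg AddMonoidAlgebra.ofCoeff Finsupp.filter_smul

lemma projJ_monomial (S : Set ((Fin N →₀ ℕ))) (d : Fin N →₀ ℕ) (c : K) :
    projJ S (monomial d c) = letI := Classical.decPred (· ∈ S);
      if d ∈ S then monomial d c else 0 := by
  letI := Classical.decPred (· ∈ S)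
  show AddMonoidAlgebra.ofCoeff (Finsupp.filter (· ∈ S) (Finsupp.single d c)) = _
  split_ifs with h
  · exact congrArg AddMonoidAlgebra.ofCoeff (Finsupp.filter_single_of_pos _ h)
  · exact congrArg AddMonoidAlgebra.ofCoeff (Finsupp.filter_single_of_neg _ h)

/-- Star condition of a decomposition `δ + α`: every variable of `δ` has index at most
that of every variable of `α`. -/
def IsStar (δ a : Fin N →₀ ℕ) : Prop := ∀ i ∈ δ.support, ∀ j ∈ a.support, i ≤ j

/-- Base-`b` numeric measure of an exponent vector. -/
def mea (b : ℕ) (δ : Fin N →₀ ℕ) : ℕ := ∑ i : Fin N, δ i * b ^ (i : ℕ)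

lemma mea_add (b : ℕ) (x y : Fin N →₀ ℕ) : mea b (x + y) = mea b x + mea b y := by
  simp [mea, Finsupp.add_apply, add_mul, Finset.sum_add_distrib]

lemma mea_single (b : ℕ) (j : Fin N) : mea b (Finsupp.single j 1) = b ^ (j : ℕ) := by
  rw [mea, Finset.sum_eq_single j]
  · simp
  · intro i _ hij; simp [Finsupp.single_apply, (Ne.symm hij : ¬ j = i)]
  · intro h; exact absurd (Finset.mem_univ j) h

lemma mea_swap_lt {b : ℕ} (hb : 2 ≤ b) {δ : Fin N →₀ ℕ} {i j : Fin N} (hji : j < i)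
    (hδi : δ i ≠ 0) : mea b (δ - Finsupp.single i 1 + Finsupp.single j 1) < mea b δ := by
  have h1 : Finsupp.single i 1 ≤ δ := Finsupp.single_le_iff.mpr (Nat.one_le_iff_ne_zero.mpr hδi)
  have h2 : (δ - Finsupp.single i 1) + Finsupp.single i 1 = δ := tsub_add_cancel_of_le h1
  have h3 : mea b (δ - Finsupp.single i 1) + b ^ (i : ℕ) = mea b δ := by
    rw [← mea_single b i, ← mea_add, h2]
  have h4 : (b : ℕ) ^ (j : ℕ) < b ^ (i : ℕ) :=
    Nat.pow_lt_pow_right (by omega) hji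
  rw [mea_add, mea_single]
  omega

lemma degOf_swap {a : Fin N →₀ ℕ} {i j : Fin N} (ha : a j ≠ 0) :
    degOf (a - Finsupp.single j 1 + Finsupp.single i 1) = degOf a := by
  have h1 : Finsupp.single j 1 ≤ a := Finsupp.single_le_iff.mpr (Nat.one_le_iff_ne_zero.mpr ha)
  have h2 : (a - Finsupp.single j 1) + Finsupp.single j 1 = a := tsub_add_cancel_of_le h1
  have := congrArg degOf h2
  rw [degOf_add, degOf_single] at this
  rw [degOf_add, degOf_single]
  omega

lemma swap_add_swap {δ a : Fin N →₀ ℕ} {i j : Fin N} (hδ : δ i ≠ 0) (ha : a j ≠ 0) :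
    (δ - Finsupp.single i 1 + Finsupp.single j 1) +
      (a - Finsupp.single j 1 + Finsupp.single i 1) = δ + a := by
  apply Finsupp.ext
  intro x
  simp only [Finsupp.add_apply, Finsupp.tsub_apply, Finsupp.single_apply]
  have h1 : δ i ≥ 1 := Nat.one_le_iff_ne_zero.mpr hδ
  have h2 : a j ≥ 1 := Nat.one_le_iff_ne_zero.mpr ha
  rcases eq_or_ne i x with hix | hix <;> rcases eq_or_ne j x with hjx | hjx <;>
    simp_all <;> omega

end Aux

section Main

variable {K : Type*} [Field K] {N m : ℕ}

/-- Every monomial of `J = (B)` admits a star decomposition `δ' + α'` with `α' ∈ B`. -/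
lemma exists_star (B : Finset (Fin N →₀ ℕ)) (hdeg : ∀ a ∈ B, degOf a = m)
    (hss : SStable (monIdeal K (B : Set (Fin N →₀ ℕ)))) {b : ℕ} (hb : 2 ≤ b) :
    ∀ D : ℕ, ∀ δ α : Fin N →₀ ℕ, α ∈ B → mea b δ ≤ D →
      ∃ δ' α', α' ∈ B ∧ δ' + α' = δ + α ∧ IsStar δ' α' := by
  intro D
  induction D using Nat.strong_induction_on with
  | _ D IH =>
    intro δ α hα hmea
    by_cases hstar : IsStar δ α
    · exact ⟨δ, α, hα, rfl, hstar⟩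
    · rw [IsStar] at hstar; push_neg at hstar
      obtain ⟨i, hi, j, hj, hij⟩ := hstar
      have hji : j < i := hij
      have hδi : δ i ≠ 0 := Finsupp.mem_support_iff.mp hi
      have hαj : α j ≠ 0 := Finsupp.mem_support_iff.mp hj
      set δ₂ := δ - Finsupp.single i 1 + Finsupp.single j 1 with hδ₂
      set α₂ := α - Finsupp.single j 1 + Finsupp.single i 1 with hα₂
      have hJα₂ : monomial α₂ (1 : K) ∈ monIdeal K (B : Set (Fin N →₀ ℕ)) :=
        hss.2 α (Ideal.subset_span ⟨α, hα, rfl⟩) j i hji hαj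
      obtain ⟨a, ha, hle⟩ := monomial_mem_monIdeal_iff.mp hJα₂
      have hdα₂ : degOf α₂ = m := by rw [hα₂, degOf_swap hαj, hdeg α hα]
      have haα₂ : a = α₂ := eq_of_le_of_degOf_eq hle (by rw [hdeg a ha, hdα₂])
      have hα₂B : α₂ ∈ B := haα₂ ▸ ha
      have hlt : mea b δ₂ < mea b δ := mea_swap_lt hb hji hδi
      obtain ⟨δ', α', h1, h2, h3⟩ := IH (mea b δ₂) (by omega) δ₂ α₂ hα₂B le_rfl
      exact ⟨δ', α', h1, by rw [h2, hδ₂, hα₂, swap_add_swap hδi hαj], h3⟩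

lemma mea_lt_of_toplex {d₀ : ℕ} {δ δ' : Fin N →₀ ℕ} (k : Fin N)
    (hhigh : ∀ j, k < j → δ j = δ' j) (hk : δ' k < δ k) (hsum : degOf δ' ≤ d₀) :
    mea (d₀ + 2) δ' < mea (d₀ + 2) δ := by
  classical
  set b := d₀ + 2 with hb
  have hsplit : ∀ γ : Fin N →₀ ℕ, mea b γ =
      (∑ j ∈ Finset.univ.filter (fun j => k < j), γ j * b ^ (j : ℕ))
      + (γ k * b ^ (k : ℕ)
      + ∑ j ∈ Finset.univ.filter (fun j => j < k), γ j * b ^ (j : ℕ)) := by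
    intro γ
    rw [mea, ← Finset.sum_filter_add_sum_filter_not Finset.univ (fun j => k < j)]
    congr 1
    have hins : Finset.univ.filter (fun j : Fin N => ¬ k < j)
        = insert k (Finset.univ.filter (fun j => j < k)) := by
      ext j
      simp only [Finset.mem_filter, Finset.mem_univ, true_and, Finset.mem_insert, not_lt]
      constructor
      · intro h
        rcases lt_or_eq_of_le h with h | h
        · exact Or.inr h
        · exact Or.inl h
      · rintro (rfl | h)
        · exact le_rfl
        · exact le_of_lt h
    rw [hins, Finset.sum_insert (by simp)]
  have hA : ∑ j ∈ Finset.univ.filter (fun j => k < j), δ j * b ^ (j : ℕ)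
      = ∑ j ∈ Finset.univ.filter (fun j => k < j), δ' j * b ^ (j : ℕ) :=
    Finset.sum_congr rfl (fun j hj => by
      rw [hhigh j (by simpa using hj)])
  have hsumlow : (∑ j ∈ Finset.univ.filter (fun j : Fin N => j < k), δ' j)
      ≤ d₀ := by
    refine le_trans ?_ hsum
    rw [degOf_eq_sum]
    exact Finset.sum_le_sum_of_subset (Finset.filter_subset _ _)
  have hlow : ∑ j ∈ Finset.univ.filter (fun j : Fin N => j < k), δ' j * b ^ (j : ℕ)
      < b ^ (k : ℕ) := by
    rcases Nat.eq_zero_or_pos (k : ℕ) with hk0 | hk0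
    · have hempty : Finset.univ.filter (fun j : Fin N => j < k) = ∅ := by
        ext j
        simp only [Finset.mem_filter, Finset.mem_univ, true_and, Finset.notMem_empty,
          iff_false]
        intro h
        have : (j : ℕ) < (k : ℕ) := h
        omega
      rw [hempty]
      simp only [Finset.sum_empty]
      positivity
    · have hle1 : ∑ j ∈ Finset.univ.filter (fun j : Fin N => j < k), δ' j * b ^ (j : ℕ)
          ≤ ∑ j ∈ Finset.univ.filter (fun j : Fin N => j < k), δ' j * b ^ ((k : ℕ) - 1) := by
        refine Finset.sum_le_sum (fun j hj => ?_)
        refine Nat.mul_le_mul_left _ (Nat.pow_le_pow_right (by omega) ?_)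
        have : (j : ℕ) < (k : ℕ) := by simpa using (Finset.mem_filter.mp hj).2
        omega
      have hle2 : ∑ j ∈ Finset.univ.filter (fun j : Fin N => j < k), δ' j * b ^ ((k : ℕ) - 1)
          = (∑ j ∈ Finset.univ.filter (fun j : Fin N => j < k), δ' j) * b ^ ((k : ℕ) - 1) :=
        (Finset.sum_mul _ _ _).symm
      have hle3 : (∑ j ∈ Finset.univ.filter (fun j : Fin N => j < k), δ' j) * b ^ ((k : ℕ) - 1)
          ≤ d₀ * b ^ ((k : ℕ) - 1) := Nat.mul_le_mul_right _ hsumlow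
      have hpow : b ^ (k : ℕ) = b * b ^ ((k : ℕ) - 1) := by
        conv_lhs => rw [show (k : ℕ) = ((k : ℕ) - 1) + 1 by omega]
        rw [pow_succ]
        ring
      have hpos : 0 < b ^ ((k : ℕ) - 1) := Nat.pow_pos (by omega)
      have : d₀ * b ^ ((k : ℕ) - 1) < b ^ (k : ℕ) := by
        rw [hpow]
        exact mul_lt_mul_of_pos_right (by omega) hpos
      omega
  rw [hsplit δ, hsplit δ', hA]
  have hP : δ' k * b ^ (k : ℕ)
      + (∑ j ∈ Finset.univ.filter (fun j : Fin N => j < k), δ' j * b ^ (j : ℕ))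
      < δ k * b ^ (k : ℕ) := by
    have h5 : δ' k * b ^ (k : ℕ) + b ^ (k : ℕ) ≤ δ k * b ^ (k : ℕ) := by
      have : (δ' k + 1) * b ^ (k : ℕ) ≤ δ k * b ^ (k : ℕ) :=
        Nat.mul_le_mul_right _ (by omega)
      nlinarith
    omega
  omega

lemma mea_lt_of_star {d₀ : ℕ} (B : Finset (Fin N →₀ ℕ)) {γ δ δ' α' : Fin N →₀ ℕ}
    (hγ : monomial γ (1 : K) ∉ monIdeal K (B : Set (Fin N →₀ ℕ)))
    (hα' : monomial α' (1 : K) ∈ monIdeal K (B : Set (Fin N →₀ ℕ)))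
    (heq : δ' + α' = δ + γ) (hstar : IsStar δ' α')
    (hdd : degOf δ' = degOf δ) (hd0 : degOf δ ≤ d₀) :
    mea (d₀ + 2) δ' < mea (d₀ + 2) δ := by
  classical
  have hcoord : ∀ x, δ' x + α' x = δ x + γ x := by
    intro x
    have := congrArg (fun v : Fin N →₀ ℕ => v x) heq
    simpa [Finsupp.add_apply] using this
  have hne : δ ≠ δ' := by
    rintro rfl
    have hαγ : α' = γ := by
      apply Finsupp.ext
      intro x
      have := hcoord x
      omega
    exact hγ (hαγ ▸ hα')
  set Dset := Finset.univ.filter (fun i : Fin N => δ i ≠ δ' i) with hD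
  have hDne : Dset.Nonempty := by
    by_contra h
    rw [Finset.not_nonempty_iff_eq_empty] at h
    apply hne
    apply Finsupp.ext
    intro i
    by_contra hi
    have hmem : i ∈ Dset := by simp [hD, hi]
    rw [h] at hmem
    exact absurd hmem (Finset.notMem_empty i)
  set k := Dset.max' hDne with hk
  have hkD : δ k ≠ δ' k := by
    have := Dset.max'_mem hDne
    simpa [hD] using this
  have hhigh : ∀ j, k < j → δ j = δ' j := by
    intro j hj
    by_contra hcon
    exact absurd (Dset.le_max' j (by simp [hD, hcon])) (not_le.mpr hj)
  rcases lt_or_gt_of_ne hkD with hlt | hgt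
  · -- δ k < δ' k : contradiction, since then α' ≤ γ and so x^γ ∈ J
    exfalso
    have hkδ' : δ' k ≠ 0 := by omega
    have hle : α' ≤ γ := by
      rw [Finsupp.le_def]
      intro j
      rcases lt_trichotomy j k with h | h | h
      · -- j < k : α' j = 0
        by_contra hcon
        have hjs : j ∈ α'.support := Finsupp.mem_support_iff.mpr (by omega)
        have hks : k ∈ δ'.support := Finsupp.mem_support_iff.mpr hkδ'
        exact absurd (hstar k hks j hjs) (not_le.mpr h)
      · have h1 := hcoord j
        have h2 : δ j < δ' j := by rw [h]; exact hlt
        omega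
      · have := hcoord j
        have := hhigh j h
        omega
    apply hγ
    have hrw : monomial γ (1 : K) = monomial (γ - α') 1 * monomial α' 1 := by
      rw [monomial_mul, one_mul, tsub_add_cancel_of_le hle]
    rw [hrw]
    exact Ideal.mul_mem_left _ _ hα'
  · exact mea_lt_of_toplex k hhigh hgt (hdd ▸ hd0)

/-- Key lemma: for every `α ∈ B` and every `δ` of degree `d₀`, the monomial `x^(δ+α)`
lies in the image under the projection `projJ` of the degree-`d₀ + m` piece of `I = (F)`. -/
lemma key_lemma (B : Finset (Fin N →₀ ℕ)) (hdeg : ∀ a ∈ B, degOf a = m)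
    (hss : SStable (monIdeal K (B : Set (Fin N →₀ ℕ))))
    (f : (Fin N →₀ ℕ) → MvPolynomial (Fin N) K) (hf : IsMarkedSet B f) (d₀ : ℕ) :
    ∀ D : ℕ, ∀ δ α : Fin N →₀ ℕ, α ∈ B → degOf δ = d₀ → mea (d₀ + 2) δ ≤ D →
      monomial (δ + α) (1 : K) ∈
        Submodule.map (projJ {β | monomial β (1 : K) ∈ monIdeal K (B : Set (Fin N →₀ ℕ))})
          (degPiece (Ideal.span (f '' (B : Set (Fin N →₀ ℕ)))) (d₀ + m)) := by
  classical
  intro D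
  induction D using Nat.strong_induction_on with
  | _ D IH =>
  intro δ α hα hdδ hmea
  obtain ⟨hhom, hcoeff, htail⟩ := hf α hα
  set S : Set (Fin N →₀ ℕ) := {β | monomial β (1 : K) ∈ monIdeal K (B : Set (Fin N →₀ ℕ))}
    with hSdef
  letI : DecidablePred (· ∈ S) := Classical.decPred (· ∈ S)
  set g := monomial δ (1 : K) * f α with hg
  have hgmem : g ∈ degPiece (Ideal.span (f '' (B : Set (Fin N →₀ ℕ)))) (d₀ + m) := by
    refine Submodule.mem_inf.mpr ⟨?_, ?_⟩
    · exact Ideal.mul_mem_left _ _ (Ideal.subset_span ⟨α, hα, rfl⟩)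
    · rw [mem_homogeneousSubmodule]
      have h1 : (monomial δ (1 : K)).IsHomogeneous d₀ :=
        isHomogeneous_monomial _ (by rw [← degOf_eq_degree, hdδ])
      have h2 : (f α).IsHomogeneous m := by rw [← hdeg α hα]; exact hhom
      exact h1.mul h2
  have hgexp : g = ∑ γ ∈ (f α).support, monomial (δ + γ) (coeff γ (f α)) := by
    conv_lhs => rw [hg, ← support_sum_monomial_coeff (f α)]
    rw [Finset.mul_sum]
    exact Finset.sum_congr rfl (fun γ _ => by rw [monomial_mul, one_mul])
  have hαs : α ∈ (f α).support := mem_support_iff.mpr (by rw [hcoeff]; exact one_ne_zero)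
  have hδαS : (δ + α) ∈ S := by
    rw [hSdef]
    exact monomial_mem_monIdeal_iff.mpr ⟨α, hα, le_add_self⟩
  have hπg : projJ S g = monomial (δ + α) (1 : K)
      + ∑ γ ∈ (f α).support.erase α,
          (if (δ + γ) ∈ S then monomial (δ + γ) (coeff γ (f α)) else 0) := by
    rw [hgexp, map_sum, ← Finset.add_sum_erase _ _ hαs]
    congr 1
    · rw [projJ_monomial]
      simp only [if_pos hδαS, hcoeff]
    · exact Finset.sum_congr rfl (fun γ _ => projJ_monomial _ _ _)
  have hrw : monomial (δ + α) (1 : K) = projJ S g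
      - ∑ γ ∈ (f α).support.erase α,
          (if (δ + γ) ∈ S then monomial (δ + γ) (coeff γ (f α)) else 0) := by
    rw [hπg]; ring
  rw [hrw]
  refine Submodule.sub_mem _ (Submodule.mem_map_of_mem hgmem) (Submodule.sum_mem _ ?_)
  intro γ hγe
  have hγα : γ ≠ α := Finset.ne_of_mem_erase hγe
  have hγs : γ ∈ (f α).support := Finset.mem_of_mem_erase hγe
  have hcγ : coeff γ (f α) ≠ 0 := mem_support_iff.mp hγs
  by_cases hmemS : (δ + γ) ∈ S
  · rw [if_pos hmemS]
    have hγJ : monomial γ (1 : K) ∉ monIdeal K (B : Set (Fin N →₀ ℕ)) := htail γ hγα hcγ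
    have hdγ : degOf γ = m := by
      have h1 : (Finsupp.weight 1) γ = degOf α := hhom hcγ
      rw [degOf_eq_degree, Finsupp.degree_eq_weight_one]
      rw [hdeg α hα] at h1
      exact h1
    obtain ⟨a, ha, hle⟩ := monomial_mem_monIdeal_iff.mp hmemS
    obtain ⟨δ', α', hα'B, hsum, hstar⟩ :=
      exists_star B hdeg hss (b := d₀ + 2) (by omega)
        (mea (d₀ + 2) (δ + γ - a)) (δ + γ - a) a ha le_rfl
    have hsum' : δ' + α' = δ + γ := by rw [hsum, tsub_add_cancel_of_le hle]
    have hdδ' : degOf δ' = d₀ := by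
      have h := congrArg degOf hsum'
      rw [degOf_add, degOf_add, hdeg α' hα'B, hdγ, hdδ] at h
      omega
    have hml : mea (d₀ + 2) δ' < mea (d₀ + 2) δ :=
      mea_lt_of_star B hγJ (Ideal.subset_span ⟨α', hα'B, rfl⟩) hsum' hstar
        (by rw [hdδ', hdδ]) (le_of_eq hdδ)
    have hmem' := IH (mea (d₀ + 2) δ') (by omega) δ' α' hα'B hdδ' le_rfl
    rw [hsum'] at hmem'
    have hsm : monomial (δ + γ) (coeff γ (f α))
        = (coeff γ (f α)) • monomial (δ + γ) (1 : K) := by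
      rw [smul_monomial, smul_eq_mul, mul_one]
    rw [hsm]
    exact Submodule.smul_mem _ _ hmem'
  · rw [if_neg hmemS]
    exact Submodule.zero_mem _

/-- Inclusion of `J_t` into the image of `I_t` under the projection. -/
lemma degPiece_le_map (B : Finset (Fin N →₀ ℕ)) (hdeg : ∀ a ∈ B, degOf a = m)
    (hss : SStable (monIdeal K (B : Set (Fin N →₀ ℕ))))
    (f : (Fin N →₀ ℕ) → MvPolynomial (Fin N) K) (hf : IsMarkedSet B f)
    {t : ℕ} (ht : m ≤ t) :
    degPiece (monIdeal K (B : Set (Fin N →₀ ℕ))) t ≤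
      Submodule.map (projJ {β | monomial β (1 : K) ∈ monIdeal K (B : Set (Fin N →₀ ℕ))})
        (degPiece (Ideal.span (f '' (B : Set (Fin N →₀ ℕ)))) t) := by
  intro p hp
  obtain ⟨hpJ, hph⟩ := Submodule.mem_inf.mp hp
  have hpJ' : p ∈ monIdeal K (B : Set (Fin N →₀ ℕ)) := hpJ
  rw [← support_sum_monomial_coeff p]
  refine Submodule.sum_mem _ ?_
  intro β hβ
  have hcβ : coeff β p ≠ 0 := mem_support_iff.mp hβ
  have hdβ : degOf β = t := by
    have h := (mem_homogeneousSubmodule _ _).mp hph hcβ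
    rw [degOf_eq_degree, Finsupp.degree_eq_weight_one]
    exact h
  obtain ⟨a, ha, hle⟩ := exists_le_of_coeff_ne_zero hpJ' hcβ
  have hdecomp : (β - a) + a = β := tsub_add_cancel_of_le hle
  have hdδ : degOf (β - a) = t - m := by
    have h := congrArg degOf hdecomp
    rw [degOf_add, hdeg a ha] at h
    omega
  have hkey := key_lemma B hdeg hss f hf (t - m) (mea (t - m + 2) (β - a)) (β - a) a ha hdδ
    le_rfl
  rw [hdecomp, show t - m + m = t by omega] at hkey
  have hsm : monomial β (coeff β p) = (coeff β p) • monomial β (1 : K) := by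
    rw [smul_monomial, smul_eq_mul, mul_one]
  rw [hsm]
  exact Submodule.smul_mem _ _ hkey

end Main

/-- Let `J` be a strongly stable monomial ideal of `T = K[x_0,…,x_n]` generated in degree `m`
(with monomial basis `B`) and `F` a `J`-marked set generating the ideal `I = (F)`. Then
`dim_K I_t ≥ dim_K J_t` for every `t ≥ m`. -/
theorem markedSet_dim_ge {K : Type*} [Field K] {n m : ℕ}
    (B : Finset (Fin (n + 1) →₀ ℕ)) (hdeg : ∀ α ∈ B, degOf α = m)
    (hss : SStable (monIdeal K (B : Set (Fin (n + 1) →₀ ℕ))))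
    (f : (Fin (n + 1) →₀ ℕ) → MvPolynomial (Fin (n + 1)) K) (hf : IsMarkedSet B f) :
    ∀ t ≥ m,
      Module.finrank K (degPiece (monIdeal K (B : Set (Fin (n + 1) →₀ ℕ))) t) ≤
      Module.finrank K (degPiece (Ideal.span (f '' (B : Set (Fin (n + 1) →₀ ℕ)))) t) := by
  intro t ht
  haveI h1 : FiniteDimensional K (homogeneousSubmodule (Fin (n + 1)) K t) := by
    refine Submodule.finiteDimensional_of_le (S₂ := restrictTotalDegree (Fin (n + 1)) K t) ?_
    intro p hp
    rw [mem_restrictTotalDegree]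
    exact ((mem_homogeneousSubmodule _ _).mp hp).totalDegree_le
  haveI h2 : FiniteDimensional K
      (degPiece (Ideal.span (f '' (B : Set (Fin (n + 1) →₀ ℕ)))) t) :=
    Submodule.finiteDimensional_of_le inf_le_right
  exact le_trans (Submodule.finrank_mono (degPiece_le_map B hdeg hss f hf ht))
    (Submodule.finrank_map_le _ _)

end
end

section
/- Let K be a field, T = K[x_0,...,x_n], J a strongly stable monomial ideal generated in degree m with monomial basis B_J, and F a J-marked set generating the ideal I = (F). Then F is a J-marked basis (i.e., T/I is freely generated as K-vector space by the monomials not in J) if and only if dim_K I_t = dim_K J_t for all t ≥ m. -/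
open MvPolynomial

noncomputable section

/-!
The monomials outside `J` span `T` modulo `I = (F)`. A monomial `x^δ ∈ J` is `x^η · x^α` where
`x^α` is its colex-largest divisor of degree `m`; strong stability puts `x^α` in `B_J`, and
rewriting `x^δ` as `x^η f_α` plus the tail `x^η (x^α - f_α)` leaves terms `x^{η'} x^{α'}` in `J`
only with `η'` colex-smaller than `η`, so this reduction terminates. Hence `I_t + N_t = T_t`,
where `N` is the span of the monomials outside `J`, and also `J_t ⊕ N_t = T_t`. Counting
dimensions, `dim I_t = dim J_t` iff `I_t ∩ N_t = 0`. As `I` and `N` are homogeneous and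
`I_t = 0` for `t < m`, this holds for all `t ≥ m` iff `I ∩ N = 0`, i.e. iff `F` is a marked basis.
-/

namespace MarkedBasis

section Exponents

variable {σ : Type*}

theorem eq_of_le_of_degree_eq {β γ : σ →₀ ℕ} (hle : β ≤ γ) (hdeg : β.degree = γ.degree) :
    β = γ := by
  have hsum : (γ - β).degree + β.degree = γ.degree := by
    rw [← map_add, tsub_add_cancel_of_le hle]
  have hzero : γ - β = 0 := (Finsupp.degree_eq_zero_iff _).mp (by omega)
  exact le_antisymm hle (tsub_eq_zero_iff_le.mp hzero)

theorem tsub_single_add_single {β : σ →₀ ℕ} {i : σ} (hi : β i ≠ 0) :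
    β - Finsupp.single i 1 + Finsupp.single i 1 = β :=
  tsub_add_cancel_of_le (Finsupp.single_le_iff.mpr (Nat.one_le_iff_ne_zero.mpr hi))

theorem degree_move {β : σ →₀ ℕ} {i k : σ} (hi : β i ≠ 0) :
    (β - Finsupp.single i 1 + Finsupp.single k 1).degree = β.degree := by
  conv_rhs => rw [← tsub_single_add_single hi]
  simp only [map_add, Finsupp.degree_single]

theorem move_le {β δ : σ →₀ ℕ} {i k : σ} (hβ : β ≤ δ) (hk : β k < δ k) :
    β - Finsupp.single i 1 + Finsupp.single k 1 ≤ δ := by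
  classical
  intro j
  simp only [Finsupp.coe_add, Finsupp.coe_tsub, Pi.add_apply, Pi.sub_apply, Finsupp.single_apply]
  have := hβ j
  split_ifs <;> subst_vars <;> omega

variable [LinearOrder σ]

theorem toColex_lt_move {β : σ →₀ ℕ} {i k : σ} (hi : β i ≠ 0) (hik : i < k) :
    toColex β < toColex (β - Finsupp.single i 1 + Finsupp.single k 1) := by
  conv_lhs => rw [← tsub_single_add_single hi]
  rw [toColex_add, toColex_add]
  exact add_lt_add_right (Finsupp.Colex.single_lt_iff.mpr hik) _

theorem exists_move_of_toColex_lt {β γ : σ →₀ ℕ} (hdeg : β.degree = γ.degree)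
    (hlt : toColex β < toColex γ) : ∃ i k, i < k ∧ β i ≠ 0 ∧ β k < γ k := by
  obtain ⟨k, habove, hk⟩ := Finsupp.Colex.lt_iff.mp hlt
  by_contra! hmove
  have hle : β ≤ γ := fun i => by
    rcases lt_trichotomy i k with hik | rfl | hki
    · by_cases hi : β i = 0
      · simp [hi]
      · exact absurd hk (hmove i k hik hi).not_gt
    · exact hk.le
    · exact (habove i hki).le
  exact hk.ne (congrArg (· k) (eq_of_le_of_degree_eq hle hdeg))

variable [DecidableEq σ]

/-- The colex-largest degree-`m` divisor of `x^δ` (junk value `0` if `deg δ < m`). For `x^δ` in a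
strongly stable ideal generated in degree `m` it is the generator `x^α` of the decomposition
`x^δ = x^α ·_J x^η` of the paper. -/
def topDivisor (m : ℕ) (δ : σ →₀ ℕ) : σ →₀ ℕ :=
  ofColex (((Finset.Iic δ).filter (·.degree = m)).sup toColex)

theorem topDivisor_le_and_degree_eq {m : ℕ} {δ : σ →₀ ℕ} (h : ∃ β ≤ δ, β.degree = m) :
    topDivisor m δ ≤ δ ∧ (topDivisor m δ).degree = m := by
  obtain ⟨β, hβ, hdeg⟩ := h
  obtain ⟨α, hα, hsup⟩ := Finset.exists_mem_eq_sup ((Finset.Iic δ).filter (·.degree = m))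
    ⟨β, by simp [hβ, hdeg]⟩ toColex
  rw [topDivisor, hsup, ofColex_toColex]
  simpa using hα

theorem toColex_le_topDivisor {m : ℕ} {β δ : σ →₀ ℕ} (hβ : β ≤ δ) (hdeg : β.degree = m) :
    toColex β ≤ toColex (topDivisor m δ) := by
  rw [topDivisor, toColex_ofColex]
  exact Finset.le_sup (f := toColex) (by simp [hβ, hdeg])

/-- A colex-maximal divisor with property `P` admits no move, hence is the top divisor. -/
theorem topDivisor_of_moveClosed {P : (σ →₀ ℕ) → Prop}
    (hP : ∀ β, P β → ∀ i k, i < k → β i ≠ 0 → P (β - Finsupp.single i 1 + Finsupp.single k 1))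
    {m : ℕ} {β δ : σ →₀ ℕ} (hβ : β ≤ δ) (hdeg : β.degree = m) (hPβ : P β) :
    P (topDivisor m δ) := by
  classical
  set S := (Finset.Iic δ).filter (fun β => β.degree = m ∧ P β)
  obtain ⟨β₀, hβ₀S, hmax⟩ := S.exists_max_image toColex ⟨β, by simp [S, hβ, hdeg, hPβ]⟩
  simp only [S, Finset.mem_filter, Finset.mem_Iic] at hβ₀S
  obtain ⟨hβ₀, hdeg₀, hPβ₀⟩ := hβ₀S
  obtain ⟨htop, hdegtop⟩ := topDivisor_le_and_degree_eq ⟨β, hβ, hdeg⟩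
  rcases (toColex_le_topDivisor hβ₀ hdeg₀).lt_or_eq with hlt | heq
  · obtain ⟨i, k, hik, hi, hk⟩ := exists_move_of_toColex_lt (hdeg₀.trans hdegtop.symm) hlt
    have hmoved : β₀ - Finsupp.single i 1 + Finsupp.single k 1 ∈ S := by
      simp only [S, Finset.mem_filter, Finset.mem_Iic]
      exact ⟨move_le hβ₀ (hk.trans_le (htop k)), (degree_move hi).trans hdeg₀,
        hP β₀ hPβ₀ i k hik hi⟩
    exact absurd (hmax _ hmoved) (toColex_lt_move hi hik).not_ge
  · rwa [← toColex_inj.mp heq]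

theorem toColex_sub_topDivisor_lt {m : ℕ} {η γ : σ →₀ ℕ} (hdeg : γ.degree = m)
    (hne : γ ≠ topDivisor m (η + γ)) :
    toColex (η + γ - topDivisor m (η + γ)) < toColex η := by
  set α := topDivisor m (η + γ)
  obtain ⟨hα, -⟩ := topDivisor_le_and_degree_eq (δ := η + γ) ⟨γ, le_add_self, hdeg⟩
  have hγα : toColex γ < toColex α :=
    (toColex_le_topDivisor le_add_self hdeg).lt_of_ne (toColex_inj.not.mpr hne)
  by_contra! hle
  have := add_lt_add_of_le_of_lt hle hγα
  rw [← toColex_add, ← toColex_add, tsub_add_cancel_of_le hα] at this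
  exact this.false

end Exponents

section Polynomials

variable {σ R : Type*} [CommSemiring R]

theorem eq_top_of_forall_monomial_mem {A : Submodule R (MvPolynomial σ R)}
    (h : ∀ δ, monomial δ (1 : R) ∈ A) : A = ⊤ := by
  rw [eq_top_iff, ← (basisMonomials σ R).span_eq, Submodule.span_le, coe_basisMonomials]
  rintro _ ⟨δ, rfl⟩
  exact h δ

theorem isCompl_restrictSupport_compl (s : Set (σ →₀ ℕ)) :
    IsCompl (restrictSupport R s) (restrictSupport R sᶜ) := by
  refine ⟨Submodule.disjoint_def.mpr fun p hs hsc => ?_,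
    codisjoint_iff.mpr (eq_top_of_forall_monomial_mem fun δ => ?_)⟩
  · ext d
    by_contra hd
    exact hsc (mem_support_iff.mpr hd) (hs (mem_support_iff.mpr hd))
  · by_cases hδ : δ ∈ s
    · exact Submodule.mem_sup_left ((monomial_mem_restrictSupport R).mpr (Or.inl hδ))
    · exact Submodule.mem_sup_right ((monomial_mem_restrictSupport R).mpr (Or.inl hδ))

theorem monomial_mul_eq_add_sum [Nontrivial R] [DecidableEq σ] {g : MvPolynomial σ R}
    {α : σ →₀ ℕ} (hα : g.coeff α = 1) (η : σ →₀ ℕ) :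
    monomial η 1 * g =
      monomial (η + α) 1 + ∑ γ ∈ g.support.erase α, g.coeff γ • monomial (η + γ) 1 := by
  have hmem : α ∈ g.support := mem_support_iff.mpr (by simp [hα])
  conv_lhs => rw [g.as_sum, Finset.mul_sum, ← Finset.add_sum_erase _ _ hmem]
  simp only [monomial_mul, one_mul, hα, smul_monomial, smul_eq_mul, mul_one]

theorem le_degree_of_mem_span {s : Set (MvPolynomial σ R)} {m : ℕ}
    (hs : ∀ g ∈ s, g.IsHomogeneous m) {p : MvPolynomial σ R} (hp : p ∈ Ideal.span s) :
    ∀ d ∈ p.support, m ≤ d.degree := by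
  classical
  induction hp using Submodule.span_induction with
  | mem g hg =>
    exact fun d hd => (not_imp_comm.mp (hs g hg).coeff_eq_zero (mem_support_iff.mp hd)).ge
  | zero => simp
  | add p q _ _ hp hq =>
    intro d hd
    rcases Finset.mem_union.mp (support_add hd) with hd | hd
    exacts [hp d hd, hq d hd]
  | smul a p _ hp =>
    intro d hd
    obtain ⟨d₁, -, d₂, hd₂, rfl⟩ := Finset.mem_add.mp (support_mul a p hd)
    simpa using le_add_left (hp d₂ hd₂)

theorem span_inf_homogeneousSubmodule_eq_bot {s : Set (MvPolynomial σ R)} {m t : ℕ}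
    (hs : ∀ g ∈ s, g.IsHomogeneous m) (ht : t < m) :
    (Ideal.span s).restrictScalars R ⊓ homogeneousSubmodule σ R t = ⊥ := by
  refine eq_bot_iff.mpr fun p ⟨hp, hpt⟩ => (Submodule.mem_bot R).mpr ?_
  refine support_eq_empty.mp (Finset.eq_empty_iff_forall_notMem.mpr fun d hd => ?_)
  have hdeg : d.degree = t :=
    not_imp_comm.mp ((mem_homogeneousSubmodule t p).mp hpt).coeff_eq_zero (mem_support_iff.mp hd)
  exact ht.not_ge (hdeg ▸ le_degree_of_mem_span hs hp d hd)

instance [Finite σ] (t : ℕ) : Module.Finite R (homogeneousSubmodule σ R t) :=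
  Module.Finite.iff_fg.mpr (homogeneousSubmodule_fg σ R t)

end Polynomials

section Graded

variable {σ R : Type*} [CommSemiring R]

def IsGraded (A : Submodule R (MvPolynomial σ R)) : Prop :=
  ∀ p ∈ A, ∀ t, homogeneousComponent t p ∈ A

theorem isGraded_restrictSupport (s : Set (σ →₀ ℕ)) : IsGraded (restrictSupport R s) := by
  intro p hp t
  rw [mem_restrictSupport_iff] at hp ⊢
  refine subset_trans (Finset.coe_subset.mpr ?_) hp
  exact support_homogeneousComponent t p ▸ Finset.filter_subset _ _

theorem isGraded_span {s : Set (MvPolynomial σ R)} (hs : ∀ g ∈ s, ∃ n, g.IsHomogeneous n) :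
    IsGraded ((Ideal.span s).restrictScalars R) := by
  classical
  let := MvPolynomial.gradedAlgebra (σ := σ) (R := R)
  exact fun p hp => homogeneousComponent_mem_of_mem (Ideal.homogeneous_span _ s hs) hp

variable {A C : Submodule R (MvPolynomial σ R)}

theorem IsGraded.inf_homogeneousSubmodule_sup_eq (hA : IsGraded A) (hC : IsGraded C)
    (hAC : A ⊔ C = ⊤) (t : ℕ) :
    A ⊓ homogeneousSubmodule σ R t ⊔ C ⊓ homogeneousSubmodule σ R t =
      homogeneousSubmodule σ R t := by
  refine le_antisymm (sup_le inf_le_right inf_le_right) fun p hp => ?_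
  obtain ⟨a, ha, c, hc, rfl⟩ := Submodule.mem_sup.mp (hAC ▸ Submodule.mem_top : p ∈ A ⊔ C)
  rw [← homogeneousComponent_eq_self ((mem_homogeneousSubmodule t _).mp hp), map_add]
  exact Submodule.add_mem_sup ⟨hA a ha t, homogeneousComponent_mem t a⟩
    ⟨hC c hc t, homogeneousComponent_mem t c⟩

theorem IsGraded.disjoint_of_forall (hA : IsGraded A) (hC : IsGraded C)
    (h : ∀ t, Disjoint (A ⊓ homogeneousSubmodule σ R t) (C ⊓ homogeneousSubmodule σ R t)) :
    Disjoint A C := by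
  refine Submodule.disjoint_def.mpr fun p hpA hpC => ?_
  rw [← sum_homogeneousComponent p]
  exact Finset.sum_eq_zero fun t _ => Submodule.disjoint_def.mp (h t) _
    ⟨hA p hpA t, homogeneousComponent_mem t p⟩ ⟨hC p hpC t, homogeneousComponent_mem t p⟩

end Graded

theorem finrank_eq_finrank_iff_disjoint {K V : Type*} [DivisionRing K] [AddCommGroup V]
    [Module K V] {A J C T : Submodule K V} [FiniteDimensional K T] (hA : A ⊔ C = T)
    (hJ : J ⊔ C = T) (hJC : Disjoint J C) :
    Module.finrank K A = Module.finrank K J ↔ Disjoint A C := by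
  have : FiniteDimensional K A := Submodule.finiteDimensional_of_le (hA ▸ le_sup_left)
  have : FiniteDimensional K J := Submodule.finiteDimensional_of_le (hJ ▸ le_sup_left)
  have : FiniteDimensional K C := Submodule.finiteDimensional_of_le (hJ ▸ le_sup_right)
  have hAC := Submodule.finrank_sup_add_finrank_inf_eq A C
  have hJC' := Submodule.finrank_sup_add_finrank_inf_eq J C
  rw [hA] at hAC
  rw [hJ, hJC.eq_bot, finrank_bot] at hJC'
  rw [disjoint_iff, ← Submodule.finrank_eq_zero]
  omega

theorem IsGraded.finrank_inf_homogeneousSubmodule_eq_iff {σ K : Type*} [Field K] [Finite σ]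
    {A J C : Submodule K (MvPolynomial σ K)} (hA : IsGraded A) (hJ : IsGraded J)
    (hC : IsGraded C) (hAC : A ⊔ C = ⊤) (hJC : IsCompl J C) (t : ℕ) :
    Module.finrank K ↥(A ⊓ homogeneousSubmodule σ K t) =
        Module.finrank K ↥(J ⊓ homogeneousSubmodule σ K t) ↔
      Disjoint (A ⊓ homogeneousSubmodule σ K t) (C ⊓ homogeneousSubmodule σ K t) :=
  finrank_eq_finrank_iff_disjoint (hA.inf_homogeneousSubmodule_sup_eq hC hAC t)
    (hJ.inf_homogeneousSubmodule_sup_eq hC hJC.sup_eq_top t)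
    (hJC.disjoint.mono inf_le_left inf_le_left)

section MonomialIdeal

variable {K : Type*} [Field K] {N : ℕ}

theorem monomial_mem_monIdeal_iff {S : Set (Fin N →₀ ℕ)} {β : Fin N →₀ ℕ} :
    monomial β (1 : K) ∈ monIdeal K S ↔ ∃ α ∈ S, α ≤ β := by
  rw [monIdeal, mem_ideal_span_monomial_image]
  simp

theorem restrictScalars_monIdeal (S : Set (Fin N →₀ ℕ)) :
    (monIdeal K S).restrictScalars K = restrictSupport K (upperClosure S) := by
  ext p
  simp [monIdeal, mem_ideal_span_monomial_image, mem_restrictSupport_iff, Set.subset_def]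

theorem compSpan_eq_restrictSupport (B : Finset (Fin N →₀ ℕ)) :
    compSpan K B = restrictSupport K (upperClosure (B : Set (Fin N →₀ ℕ)))ᶜ := by
  rw [compSpan, restrictSupport_eq_span]
  congr 1
  ext p
  exact exists_congr fun β => and_congr (not_congr monomial_mem_monIdeal_iff) eq_comm

theorem isGraded_monIdeal (S : Set (Fin N →₀ ℕ)) :
    IsGraded ((monIdeal K S).restrictScalars K) := by
  rw [restrictScalars_monIdeal]
  exact isGraded_restrictSupport _

theorem isGraded_compSpan (B : Finset (Fin N →₀ ℕ)) : IsGraded (compSpan K B) := by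
  rw [compSpan_eq_restrictSupport]
  exact isGraded_restrictSupport _

theorem isCompl_monIdeal_compSpan (B : Finset (Fin N →₀ ℕ)) :
    IsCompl ((monIdeal K (B : Set (Fin N →₀ ℕ))).restrictScalars K) (compSpan K B) := by
  rw [restrictScalars_monIdeal, compSpan_eq_restrictSupport]
  exact isCompl_restrictSupport_compl _

variable {B : Finset (Fin N →₀ ℕ)} {m : ℕ}

theorem topDivisor_mem (hdeg : ∀ α ∈ B, α.degree = m)
    (hss : SStable (monIdeal K (B : Set (Fin N →₀ ℕ)))) {δ : Fin N →₀ ℕ}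
    (hδ : monomial δ (1 : K) ∈ monIdeal K (B : Set (Fin N →₀ ℕ))) : topDivisor m δ ∈ B := by
  obtain ⟨α₀, hα₀B, hα₀⟩ := monomial_mem_monIdeal_iff.mp hδ
  have htop : monomial (topDivisor m δ) (1 : K) ∈ monIdeal K (B : Set (Fin N →₀ ℕ)) :=
    topDivisor_of_moveClosed (P := fun β => monomial β (1 : K) ∈ monIdeal K (B : Set (Fin N →₀ ℕ)))
      hss.2 hα₀ (hdeg α₀ hα₀B) (Ideal.subset_span ⟨α₀, hα₀B, rfl⟩)
  obtain ⟨α, hαB, hα⟩ := monomial_mem_monIdeal_iff.mp htop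
  obtain ⟨-, htopdeg⟩ := topDivisor_le_and_degree_eq ⟨α₀, hα₀, hdeg α₀ hα₀B⟩
  rwa [← eq_of_le_of_degree_eq hα ((hdeg α hαB).trans htopdeg.symm)]

theorem monomial_mem_sup_compSpan (hdeg : ∀ α ∈ B, α.degree = m)
    (hss : SStable (monIdeal K (B : Set (Fin N →₀ ℕ))))
    {f : (Fin N →₀ ℕ) → MvPolynomial (Fin N) K} (hf : IsMarkedSet B f)
    {I : Ideal (MvPolynomial (Fin N) K)} (hI : ∀ α ∈ B, f α ∈ I) (δ : Fin N →₀ ℕ) :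
    monomial δ (1 : K) ∈ I.restrictScalars K ⊔ compSpan K B := by
  classical
  induction hη : toColex (δ - topDivisor m δ) using WellFoundedLT.induction generalizing δ with
  | _ η IH =>
  by_cases hδ : monomial δ (1 : K) ∈ monIdeal K (B : Set (Fin N →₀ ℕ))
  swap
  · exact Submodule.mem_sup_right (Submodule.subset_span ⟨δ, hδ, rfl⟩)
  obtain ⟨α₀, hα₀B, hα₀⟩ := monomial_mem_monIdeal_iff.mp hδ
  obtain ⟨hαδ, -⟩ := topDivisor_le_and_degree_eq ⟨α₀, hα₀, hdeg α₀ hα₀B⟩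
  have hαB := topDivisor_mem hdeg hss hδ
  set α := topDivisor m δ
  obtain ⟨hhom, hlead, htail⟩ := hf α hαB
  rw [← tsub_add_cancel_of_le hαδ, eq_sub_of_add_eq (monomial_mul_eq_add_sum hlead _).symm]
  refine Submodule.sub_mem _ (Submodule.mem_sup_left (I.mul_mem_left _ (hI α hαB)))
    (Submodule.sum_mem _ fun γ hγ => Submodule.smul_mem _ _ ?_)
  obtain ⟨hγα, hγ⟩ := Finset.mem_erase.mp hγ
  by_cases hJ : monomial (δ - α + γ) (1 : K) ∈ monIdeal K (B : Set (Fin N →₀ ℕ))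
  · have hγdeg : γ.degree = m :=
      hdeg α hαB ▸ not_imp_comm.mp hhom.coeff_eq_zero (mem_support_iff.mp hγ)
    have hγtop : γ ≠ topDivisor m (δ - α + γ) := fun h =>
      htail γ hγα (mem_support_iff.mp hγ)
        (h ▸ Ideal.subset_span ⟨_, topDivisor_mem hdeg hss hJ, rfl⟩)
    exact IH _ (hη ▸ toColex_sub_topDivisor_lt hγdeg hγtop) _ rfl
  · exact Submodule.mem_sup_right (Submodule.subset_span ⟨_, hJ, rfl⟩)

theorem span_sup_compSpan_eq_top (hdeg : ∀ α ∈ B, α.degree = m)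
    (hss : SStable (monIdeal K (B : Set (Fin N →₀ ℕ))))
    {f : (Fin N →₀ ℕ) → MvPolynomial (Fin N) K} (hf : IsMarkedSet B f) :
    (Ideal.span (f '' (B : Set (Fin N →₀ ℕ)))).restrictScalars K ⊔ compSpan K B = ⊤ :=
  eq_top_of_forall_monomial_mem
    (monomial_mem_sup_compSpan hdeg hss hf fun α hα => Ideal.subset_span ⟨α, hα, rfl⟩)

theorem isMarkedBasis_iff_disjoint (hdeg : ∀ α ∈ B, α.degree = m)
    (hss : SStable (monIdeal K (B : Set (Fin N →₀ ℕ))))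
    {f : (Fin N →₀ ℕ) → MvPolynomial (Fin N) K} (hf : IsMarkedSet B f) :
    IsMarkedBasis B f ↔
      Disjoint ((Ideal.span (f '' (B : Set (Fin N →₀ ℕ)))).restrictScalars K) (compSpan K B) :=
  ⟨fun h => disjoint_iff.mpr h.2.1,
    fun h => ⟨hf, disjoint_iff.mp h, span_sup_compSpan_eq_top hdeg hss hf⟩⟩

end MonomialIdeal

end MarkedBasis

open MarkedBasis in
/-- Let `J` be a strongly stable monomial ideal of `T = K[x_0,…,x_n]` generated in degree `m`
with monomial basis `B`, and `F` a `J`-marked set generating the ideal `I = (F)`. Then `F` is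
a `J`-marked basis (i.e. `T/I` is freely generated as a `K`-vector space by the monomials not
in `J`) if and only if `dim_K I_t = dim_K J_t` for all `t ≥ m`. -/
theorem isMarkedBasis_iff_dim_eq {K : Type*} [Field K] {n m : ℕ}
    (B : Finset (Fin (n + 1) →₀ ℕ)) (hdeg : ∀ α ∈ B, degOf α = m)
    (hss : SStable (monIdeal K (B : Set (Fin (n + 1) →₀ ℕ))))
    (f : (Fin (n + 1) →₀ ℕ) → MvPolynomial (Fin (n + 1)) K) (hf : IsMarkedSet B f) :
    IsMarkedBasis B f ↔
      ∀ t ≥ m,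
        Module.finrank K (degPiece (Ideal.span (f '' (B : Set (Fin (n + 1) →₀ ℕ)))) t) =
        Module.finrank K (degPiece (monIdeal K (B : Set (Fin (n + 1) →₀ ℕ))) t) := by
  have hgens : ∀ g ∈ f '' (B : Set (Fin (n + 1) →₀ ℕ)), g.IsHomogeneous m := by
    rintro _ ⟨α, hα, rfl⟩
    exact hdeg α hα ▸ (hf α hα).1
  have hI := isGraded_span fun g hg => ⟨m, hgens g hg⟩
  have hdim := hI.finrank_inf_homogeneousSubmodule_eq_iff (isGraded_monIdeal (K := K) _)
    (isGraded_compSpan B) (span_sup_compSpan_eq_top hdeg hss hf) (isCompl_monIdeal_compSpan B)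
  rw [isMarkedBasis_iff_disjoint hdeg hss hf]
  refine ⟨fun h t _ => (hdim t).mpr (h.mono inf_le_left inf_le_left),
    fun h => hI.disjoint_of_forall (isGraded_compSpan B) fun t => ?_⟩
  rcases lt_or_ge t m with ht | ht
  · exact (span_inf_homogeneousSubmodule_eq_bot hgens ht).symm ▸ disjoint_bot_left
  · exact (hdim t).mp (h t ht)

end
end

section
/- Let p(t) be an admissible Hilbert polynomial of degree d for subschemes of P^n, and let J be a strongly stable monomial ideal in k[x_0,...,x_n] such that k[x_0,...,x_n]/J has Hilbert polynomial p(t). Then J contains every monomial of sufficiently large degree in the variables x_{d+1},...,x_n; equivalently, for t ≥ reg(J), all monomials of k[x_{d+1},...,x_n]_t belong to J. -/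
/-!
Moving exponent mass to higher-indexed variables preserves membership in a strongly stable
ideal `J`. Suppose `x^γ ∉ J` for some `γ` of degree `t` supported on `x_{d+1},…,x_n`. Since `x^γ`
is obtained from `x_{d+1}^t` by such moves, `x_{d+1}^t ∉ J`; since `x_{d+1}^t` is obtained in
the same way from every monomial of degree `t` in `x_0,…,x_{d+1}`, none of these
`C(t+d+1, d+1)` monomials lies in `J` either. For a monomial ideal they are independent modulo
`J_t`, so the Hilbert function is at least `C(t+d+1, d+1)`, which grows like `t^(d+1)` and
eventually exceeds the degree `d` Hilbert polynomial.
-/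

open MvPolynomial

noncomputable section

open Filter Finsupp

def StronglyStableExponents {σ : Type*} [Preorder σ] (M : Set (σ →₀ ℕ)) : Prop :=
  ∀ (β : σ →₀ ℕ) (i j : σ), i < j → β + single i 1 ∈ M → β + single j 1 ∈ M

namespace StronglyStableExponents

variable {σ : Type*} [PartialOrder σ] {M : Set (σ →₀ ℕ)}

theorem add_single_mem_of_le (hM : StronglyStableExponents M) {i j : σ} (hij : i ≤ j)
    (b : ℕ) {β : σ →₀ ℕ} (hβ : β + single i b ∈ M) : β + single j b ∈ M := by
  induction b generalizing β with
  | zero => simpa using hβ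
  | succ b ih =>
    rcases hij.eq_or_lt with rfl | hlt
    · exact hβ
    have h1 : β + single i b + single j 1 ∈ M :=
      hM _ i j hlt (by rwa [add_assoc, ← single_add])
    have h2 := ih (β := β + single j 1) (by rwa [add_right_comm])
    rwa [add_assoc, ← single_add, add_comm 1] at h2

theorem single_degree_mem_of_mem (hM : StronglyStableExponents M) (e : σ) {α : σ →₀ ℕ}
    (hα : α ∈ M) (hsupp : ∀ i, α i ≠ 0 → i ≤ e) : single e α.degree ∈ M := by
  suffices ∀ c, α + single e c ∈ M → single e (α.degree + c) ∈ M by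
    simpa using this 0 (by simpa using hα)
  clear hα
  induction α using Finsupp.induction with
  | zero => simp
  | single_add a b f ha hb ih =>
    intro c hmem
    have hfe : f + single e (c + b) ∈ M := by
      have := hM.add_single_mem_of_le (hsupp a (by simp [hb, notMem_support_iff.1 ha])) b
        (β := f + single e c) (by rwa [add_right_comm, add_comm f])
      rwa [add_assoc, ← single_add] at this
    have := ih (fun i hi => hsupp i (by simp; omega)) _ hfe
    rwa [map_add, degree_single, add_comm b, add_assoc, add_comm b]

theorem mem_of_single_degree_mem (hM : StronglyStableExponents M) (e : σ) {γ : σ →₀ ℕ}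
    (hsupp : ∀ i, γ i ≠ 0 → e ≤ i) (hγ : single e γ.degree ∈ M) : γ ∈ M := by
  suffices ∀ c, single e (γ.degree + c) ∈ M → γ + single e c ∈ M by
    simpa using this 0 (by simpa using hγ)
  clear hγ
  induction γ using Finsupp.induction with
  | zero => simp
  | single_add a b f ha hb ih =>
    intro c hmem
    have hfe : f + single e (c + b) ∈ M :=
      ih (fun i hi => hsupp i (by simp; omega)) _ (by
        rwa [map_add, degree_single, add_comm b, add_assoc, add_comm b] at hmem)
    have := hM.add_single_mem_of_le (hsupp a (by simp [hb, notMem_support_iff.1 ha])) b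
      (β := f + single e c) (by rwa [add_assoc, ← single_add])
    rwa [add_right_comm, add_comm f] at this

end StronglyStableExponents

instance MvPolynomial.homogeneousSubmodule.finite {σ R : Type*} [CommSemiring R] [Finite σ]
    (n : ℕ) : Module.Finite R (homogeneousSubmodule σ R n) :=
  Module.Finite.iff_fg.2 (weightedHomogeneousSubmodule_fg R 1 (fun _ => one_ne_zero) n)

section MonomialIdeal

variable {K : Type*} [Field K] {N : ℕ}

theorem monomial_mem_monIdeal_of_mem_support {S : Set (Fin N →₀ ℕ)}
    {f : MvPolynomial (Fin N) K} (hf : f ∈ monIdeal K S) {β : Fin N →₀ ℕ} (hβ : β ∈ f.support) :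
    monomial β (1 : K) ∈ monIdeal K S := by
  rw [monIdeal, mem_ideal_span_monomial_image] at hf ⊢
  intro β' hβ'
  exact Finset.mem_singleton.1 (support_monomial_subset hβ') ▸ hf β hβ

theorem SStable.stronglyStableExponents {J : Ideal (MvPolynomial (Fin N) K)} (hJ : SStable J) :
    StronglyStableExponents {α | monomial α (1 : K) ∈ J} := by
  intro β i j hij hβ
  simpa using hJ.2 _ hβ i j hij (by simp)

theorem card_le_hilbF {S : Set (Fin N →₀ ℕ)} (t : ℕ) (B : Finset (Fin N →₀ ℕ))
    (hBdeg : ∀ α ∈ B, α.degree = t) (hBJ : ∀ α ∈ B, monomial α (1 : K) ∉ monIdeal K S) :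
    B.card ≤ hilbF (monIdeal K S) t := by
  set W := restrictSupport K (B : Set (Fin N →₀ ℕ))
  have hJ : degPiece (monIdeal K S) t ≤ homogeneousSubmodule (Fin N) K t := inf_le_right
  have hW : W ≤ homogeneousSubmodule (Fin N) K t := by
    rw [homogeneousSubmodule_eq_finsupp_supported]
    exact restrictSupport_mono K fun α hα => hBdeg α hα
  have hdisj : Disjoint W (degPiece (monIdeal K S) t) := by
    rw [Submodule.disjoint_def]
    intro f hfW ⟨hfJ, _⟩
    by_contra hf
    obtain ⟨β, hβ⟩ := support_nonempty.2 hf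
    exact hBJ β (hfW hβ) (monomial_mem_monIdeal_of_mem_support hfJ hβ)
  have hcard : Module.finrank K W = B.card := by
    simp [W, Module.finrank_eq_card_basis (basisRestrictSupport K (B : Set (Fin N →₀ ℕ)))]
  have hWfin := Submodule.finiteDimensional_of_le hW
  have hJfin := Submodule.finiteDimensional_of_le hJ
  have hsum : Module.finrank K W + Module.finrank K (degPiece (monIdeal K S) t) ≤
      Module.finrank K (homogeneousSubmodule (Fin N) K t) := by
    rw [← Submodule.finrank_sup_add_finrank_inf_eq, hdisj.eq_bot, finrank_bot, add_zero]
    exact Submodule.finrank_mono (sup_le hW hJ)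
  unfold hilbF
  omega

end MonomialIdeal

theorem choose_le_hilbF_of_monomial_notMem {K : Type*} [Field K] {N : ℕ}
    {S : Set (Fin N →₀ ℕ)} (hS : SStable (monIdeal K S)) (e : Fin N) {γ : Fin N →₀ ℕ}
    (hsupp : ∀ i, γ i ≠ 0 → e ≤ i) (hγ : monomial γ (1 : K) ∉ monIdeal K S) :
    (γ.degree + e).choose e ≤ hilbF (monIdeal K S) γ.degree := by
  classical
  have hM := hS.stronglyStableExponents
  have hB := card_le_hilbF γ.degree ((Finset.Iic e).finsuppAntidiag γ.degree)
    (fun α hα => (Finset.mem_finsuppAntidiag'.1 hα).1) fun α hα hαS => by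
      obtain ⟨hdeg, hαe⟩ := Finset.mem_finsuppAntidiag'.1 hα
      have hsingle := hM.single_degree_mem_of_mem e hαS
        fun i hi => Finset.mem_Iic.1 (hαe (mem_support_iff.2 hi))
      exact hγ (hM.mem_of_single_degree_mem e hsupp (hdeg ▸ hsingle))
  rw [add_comm, Nat.choose_symm_add]
  rwa [Finset.card_finsuppAntidiag_nat_eq_choose, Fin.card_Iic, add_right_comm,
    Nat.add_sub_cancel] at hB

namespace Polynomial

theorem eventually_eval_lt_const_mul_pow {𝕜 : Type*} [NormedField 𝕜] [LinearOrder 𝕜]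
    [IsStrictOrderedRing 𝕜] [OrderTopology 𝕜] (P : Polynomial 𝕜) {c : 𝕜} (hc : 0 < c) {k : ℕ}
    (hk : P.natDegree < k) : ∀ᶠ x in atTop, P.eval x < c * x ^ k := by
  have hdeg : (C c * X ^ k).degree = (k : WithBot ℕ) := degree_C_mul_X_pow k hc.ne'
  have hlt : P.degree < (C c * X ^ k).degree :=
    hdeg ▸ degree_le_natDegree.trans_lt (by exact_mod_cast hk)
  have hgap := tendsto_atTop_of_leadingCoeff_nonneg (C c * X ^ k - P)
    (by rw [degree_sub_eq_left_of_degree_lt hlt, hdeg]; exact_mod_cast hk.pos)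
    (by rw [leadingCoeff_sub_of_degree_lt hlt, leadingCoeff_C_mul_X_pow]; exact hc.le)
  filter_upwards [hgap.eventually_gt_atTop 0] with x hx
  simpa [sub_pos] using hx

open Nat in
theorem eventually_eval_lt_choose (P : Polynomial ℚ) {r : ℕ} (hr : P.natDegree < r) :
    ∀ᶠ t : ℕ in atTop, P.eval (t : ℚ) < (t + r).choose r := by
  filter_upwards [tendsto_natCast_atTop_atTop.eventually <|
    P.eventually_eval_lt_const_mul_pow (inv_pos.2 (cast_pos.2 r.factorial_pos)) hr] with t ht
  have hchoose := pow_le_choose (α := ℚ) r (t + r)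
  rw [show t + r + 1 - r = t + 1 by omega, div_eq_inv_mul] at hchoose
  have hpow : ((r ! : ℚ))⁻¹ * (t : ℚ) ^ r ≤ (r ! : ℚ)⁻¹ * ((t + 1 : ℕ) : ℚ) ^ r := by
    gcongr
    exact_mod_cast t.le_succ
  linarith

end Polynomial

theorem sstable_contains_last_variables_general {k : Type*} [Field k] {n d : ℕ}
    (J : Ideal (MvPolynomial (Fin (n + 1)) k)) (hss : SStable J)
    (p : Polynomial ℚ) (hdeg : p.natDegree = d)
    (hp : ∃ T : ℕ, ∀ t ≥ T, (hilbF J t : ℚ) = p.eval (t : ℚ)) :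
    ∃ T : ℕ, ∀ t ≥ T, ∀ α : Fin (n + 1) →₀ ℕ, degOf α = t →
      (∀ i : Fin (n + 1), α i ≠ 0 → d + 1 ≤ (i : ℕ)) → (monomial α (1 : k)) ∈ J := by
  rcases le_or_gt n d with hnd | hdn
  · refine ⟨1, fun t ht α hα hsupp => ?_⟩
    have hα0 : α = 0 := by
      ext i
      by_contra hi
      have := hsupp i hi
      omega
    simp [hα0, degOf] at hα
    omega
  obtain ⟨S, rfl⟩ := hss.1
  obtain ⟨T₀, hT₀⟩ := hp
  obtain ⟨T₁, hT₁⟩ := eventually_atTop.1 (p.eventually_eval_lt_choose (r := d + 1) (by omega))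
  refine ⟨max T₀ T₁, fun t ht α hα hsupp => ?_⟩
  by_contra hαJ
  have hcount : (t + (d + 1)).choose (d + 1) ≤ hilbF (monIdeal k S) t :=
    hα ▸ choose_le_hilbF_of_monomial_notMem hss ⟨d + 1, by omega⟩ hsupp hαJ
  have hlt := hT₁ t (le_of_max_le_right ht)
  rw [← hT₀ t (le_of_max_le_left ht)] at hlt
  exact hcount.not_gt (by exact_mod_cast hlt)

/-- Let `J` be a strongly stable monomial ideal of `k[x_0,…,x_n]` (char `k = 0`) such that
`k[x_0,…,x_n]/J` has Hilbert polynomial `p(t)` of degree `d`. Then `J` contains every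
monomial of sufficiently large degree in the variables `x_{d+1},…,x_n`. -/
theorem sstable_contains_last_variables {k : Type*} [Field k] [CharZero k] {n d : ℕ}
    (J : Ideal (MvPolynomial (Fin (n + 1)) k)) (hss : SStable J)
    (p : Polynomial ℚ) (hdeg : p.natDegree = d) (hdn : d ≤ n)
    (hp : ∃ T : ℕ, ∀ t ≥ T, (hilbF J t : ℚ) = p.eval (t : ℚ)) :
    ∃ T : ℕ, ∀ t ≥ T, ∀ α : Fin (n + 1) →₀ ℕ, degOf α = t →
      (∀ i : Fin (n + 1), α i ≠ 0 → d + 1 ≤ (i : ℕ)) → (monomial α (1 : k)) ∈ J :=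
  sstable_contains_last_variables_general J hss p hdeg hp
end
end

section
/- Let J be a strongly stable monomial ideal in k[x_0,...,x_n] and let x^β ∈ J be a monomial. Then there exists a unique monomial x^α in the minimal monomial generating set B_J of J and a unique monomial x^η with x^β = x^η·x^α and max(x^η) ≤ min(x^α), where min(x^α) denotes the smallest-index variable dividing x^α and max(x^η) the largest-index variable dividing x^η. -/
open MvPolynomial

noncomputable section

/-!
Existence: peel off the smallest variable `x_m` of `x^β` as long as the quotient stays in `J`.
When it no longer does, `x^β` is a minimal generator: if `x^β / x_i ∈ J` for some `i > m`,
strong stability moves `x_m` to `x_i` and gives `x^β / x_m ∈ J`. Every peeled variable is at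
most every variable of what remains, which is the order condition.

Uniqueness: two such factorizations `x^η x^α = x^η' x^α'` have comparable `α, α'`, since a
variable where `α` exceeds `α'` divides `x^η'` and one where `α'` exceeds `α` divides `x^η`,
and the order conditions force both to be the same variable. Comparable minimal generators
are equal.
-/

open Finsupp

section MinimalMonomial

variable {σ R : Type*} [CommSemiring R]

/-- For a monomial ideal `J`, these are the exponents of the minimal monomial generators `B_J`. -/
def IsMinimalMonomial (J : Ideal (MvPolynomial σ R)) (α : σ →₀ ℕ) : Prop :=
  monomial α (1 : R) ∈ J ∧ ∀ i, α i ≠ 0 → monomial (α - single i 1) (1 : R) ∉ J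

theorem monomial_mem_of_le {J : Ideal (MvPolynomial σ R)} {α β : σ →₀ ℕ}
    (hα : monomial α (1 : R) ∈ J) (hle : α ≤ β) : monomial β (1 : R) ∈ J := by
  have hβ : monomial β (1 : R) = monomial (β - α) 1 * monomial α 1 := by
    rw [monomial_mul, one_mul, tsub_add_cancel_of_le hle]
  rw [hβ]
  exact J.mul_mem_left _ hα

theorem IsMinimalMonomial.eq_of_mem_of_le {J : Ideal (MvPolynomial σ R)} {α α' : σ →₀ ℕ}
    (hα' : IsMinimalMonomial J α') (hα : monomial α (1 : R) ∈ J) (hle : α ≤ α') : α = α' := by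
  classical
  by_contra hne
  obtain ⟨i, hi⟩ : ∃ i, α i < α' i := by
    by_contra! h
    exact hne (le_antisymm hle fun i => h i)
  refine hα'.2 i (by omega) (monomial_mem_of_le hα fun j => ?_)
  have hj := hle j
  rw [tsub_apply, single_apply]
  split_ifs with hij
  · subst hij
    omega
  · omega

end MinimalMonomial

section Factorization

variable {σ : Type*} [LinearOrder σ]

/-- `max(x^η) ≤ min(x^α)`; vacuous when either monomial is `1`. -/
def MaxLEMin (η α : σ →₀ ℕ) : Prop :=
  ∀ i j, η i ≠ 0 → α j ≠ 0 → i ≤ j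

theorem MaxLEMin.add_single {η α : σ →₀ ℕ} {m : σ} (hηα : MaxLEMin η α)
    (hm : ∀ j, α j ≠ 0 → m ≤ j) : MaxLEMin (η + single m 1) α := by
  classical
  intro i j hi hj
  by_cases hηi : η i = 0
  · obtain rfl : i = m := by simpa [hηi, single_apply, eq_comm] using hi
    exact hm j hj
  · exact hηα i j hηi hj

theorem le_or_le_of_add_eq_add {η α η' α' : σ →₀ ℕ} (h : η + α = η' + α')
    (hηα : MaxLEMin η α) (hηα' : MaxLEMin η' α') : α ≤ α' ∨ α' ≤ α := by
  by_contra! hc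
  obtain ⟨⟨i, hi⟩, ⟨j, hj⟩⟩ : (∃ i, α' i < α i) ∧ ∃ j, α j < α' j := by
    simpa [Finsupp.le_def] using hc
  have hi' : η i + α i = η' i + α' i := by simpa using DFunLike.congr_fun h i
  have hj' : η j + α j = η' j + α' j := by simpa using DFunLike.congr_fun h j
  obtain rfl : i = j :=
    le_antisymm (hηα' i j (by omega) (by omega)) (hηα j i (by omega) (by omega))
  omega

theorem IsMinimalMonomial.factorization_unique {R : Type*} [CommSemiring R]
    {J : Ideal (MvPolynomial σ R)} {α η α' η' : σ →₀ ℕ}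
    (hα : IsMinimalMonomial J α) (hα' : IsMinimalMonomial J α') (h : η + α = η' + α')
    (hηα : MaxLEMin η α) (hηα' : MaxLEMin η' α') : α = α' ∧ η = η' := by
  obtain rfl : α = α' := (le_or_le_of_add_eq_add h hηα hηα').elim
    (hα'.eq_of_mem_of_le hα.1) fun hle => (hα.eq_of_mem_of_le hα'.1 hle).symm
  exact ⟨rfl, add_right_cancel h⟩

end Factorization

section StronglyStable

variable {K : Type*} [Field K] {N : ℕ} {J : Ideal (MvPolynomial (Fin N) K)}

theorem SStable.isMinimalMonomial_of_sub_single_min_notMem (hss : SStable J)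
    {β : Fin N →₀ ℕ} {m : Fin N} (hβ : monomial β (1 : K) ∈ J) (hm : β m ≠ 0)
    (hmin : ∀ j, β j ≠ 0 → m ≤ j) (hβm : monomial (β - single m 1) (1 : K) ∉ J) :
    IsMinimalMonomial J β := by
  refine ⟨hβ, fun i hi hβi => ?_⟩
  rcases (hmin i hi).lt_or_eq with hmi | rfl
  · have hmove := hss.2 _ hβi m i hmi (by simp [hmi.ne']; omega)
    have hβm_eq : β - single i 1 - single m 1 + single i 1 = β - single m 1 := by
      ext j
      simp only [Finsupp.coe_add, coe_tsub, Pi.add_apply, Pi.sub_apply, single_apply]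
      split_ifs <;> subst_vars <;> omega
    exact hβm (hβm_eq ▸ hmove)
  · exact hβm hβi

theorem SStable.exists_factorization (hss : SStable J) (β : Fin N →₀ ℕ)
    (hβ : monomial β (1 : K) ∈ J) :
    ∃ α η : Fin N →₀ ℕ, IsMinimalMonomial J α ∧ β = η + α ∧ MaxLEMin η α := by
  induction β using WellFoundedLT.induction with
  | _ β ih =>
  rcases β.support.eq_empty_or_nonempty with hβ0 | hsupp
  · obtain rfl : β = 0 := support_eq_empty.1 hβ0
    exact ⟨0, 0, ⟨hβ, by simp⟩, rfl, by simp [MaxLEMin]⟩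
  set m := β.support.min' hsupp
  have hm : β m ≠ 0 := mem_support_iff.1 (β.support.min'_mem hsupp)
  have hmin : ∀ j, β j ≠ 0 → m ≤ j := fun j hj => β.support.min'_le j (mem_support_iff.2 hj)
  by_cases hβm : monomial (β - single m 1) (1 : K) ∈ J
  · have hlt : β - single m 1 < β :=
      lt_of_le_of_ne tsub_le_self fun h => by
        have hβm' := DFunLike.congr_fun h m
        simp only [coe_tsub, Pi.sub_apply, single_eq_same] at hβm'
        omega
    obtain ⟨α, η, hα, hfac, hηα⟩ := ih _ hlt hβm
    have hαβ : α ≤ β := (hfac ▸ le_add_self).trans tsub_le_self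
    refine ⟨α, η + single m 1, hα, ?_, hηα.add_single fun j hj => hmin j ?_⟩
    · rw [add_right_comm, ← hfac, tsub_add_cancel_of_le (single_le_iff.2 (by omega))]
    · have hαβj := hαβ j
      omega
  · exact ⟨β, 0, hss.isMinimalMonomial_of_sub_single_min_notMem hβ hm hmin hβm,
      (zero_add β).symm, by simp [MaxLEMin]⟩

end StronglyStable

/-- Let `J` be a strongly stable monomial ideal of `k[x_0,…,x_n]` with minimal monomial
generating set `B_J` and let `x^β ∈ J` be a monomial. Then there exist a unique `x^α ∈ B_J`
and a unique monomial `x^η` with `x^β = x^η · x^α` and `max(x^η) ≤ min(x^α)` (every variable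
dividing `x^η` is at most every variable dividing `x^α`). -/
theorem sstable_unique_factorization {K : Type*} [Field K] {n : ℕ}
    (J : Ideal (MvPolynomial (Fin (n + 1)) K)) (hss : SStable J)
    (B : Set (Fin (n + 1) →₀ ℕ))
    (hB : ∀ α : Fin (n + 1) →₀ ℕ, α ∈ B ↔
      ((monomial α (1 : K)) ∈ J ∧
        ∀ i : Fin (n + 1), α i ≠ 0 → (monomial (α - Finsupp.single i 1) (1 : K)) ∉ J))
    (β : Fin (n + 1) →₀ ℕ) (hβ : (monomial β (1 : K)) ∈ J) :
    ∃! p : (Fin (n + 1) →₀ ℕ) × (Fin (n + 1) →₀ ℕ),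
      p.1 ∈ B ∧ β = p.2 + p.1 ∧
      ∀ i j : Fin (n + 1), p.2 i ≠ 0 → p.1 j ≠ 0 → i ≤ j := by
  obtain rfl : B = {α | IsMinimalMonomial J α} := Set.ext hB
  obtain ⟨α, η, hα, hβ_eq, hηα⟩ := hss.exists_factorization β hβ
  refine ⟨(α, η), ⟨hα, hβ_eq, hηα⟩, ?_⟩
  rintro ⟨α', η'⟩ ⟨hα', hβ_eq', hηα'⟩
  obtain ⟨rfl, rfl⟩ := IsMinimalMonomial.factorization_unique hα' hα (hβ_eq'.symm.trans hβ_eq)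
    hηα' hηα
  rfl

end
end
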